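/- arXiv:2407.19796 — 2 statements merged into one kernel-verified Lean document; each statement's English description precedes it below -/
import Mathlib

section
/- Suppose p = (u_1,...,u_h) is an h-segmentation of a string of length s = |u_1···u_h| such that p can be embedded into both strings S and T, and the last segment u_h is a common suffix of S and T. Then there is an h-segmentation p' = (u_1',...,u_h') of a (possibly different) string of the same length s that can be embedded into both S and T, such that |u_h'| = min{lcsuf(S,T), s}, where lcsuf(S,T) is the length of the longest common suffix of S and T. -/
open List

/-- `Embeds us T` : the segments `us` can be embedded (in order, with gaps) into `T`,
i.e. `T = p ++ u₁ ++ g₁ ++ u₂ ++ ⋯ ++ u_f ++ s`. -/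
def Embeds {α : Type*} : List (List α) → List α → Prop
  | [], _ => True
  | u :: us, T => ∃ p T', T = p ++ u ++ T' ∧ Embeds us T'

/-- `SegSub f T` : the set of `f`-segmental subsequences of `T`. -/
def SegSub {α : Type*} (f : ℕ) (T : List α) : Set (List α) :=
  { P | ∃ us : List (List α), us.length = f ∧ us.flatten = P ∧ Embeds us T }

/-- `slcs S T h` : maximum length of a string having an `h`-segmentation
embeddable into both `S` and `T`. -/
noncomputable def slcs {α : Type*} (S T : List α) (h : ℕ) : ℕ :=
  sSup { s | ∃ P : List α, P.length = s ∧ P ∈ SegSub h S ∧ P ∈ SegSub h T }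

/-- `lcsuf S T` : length of the longest common suffix of `S` and `T`. -/
noncomputable def lcsuf {α : Type*} (S T : List α) : ℕ :=
  sSup { l | ∃ w : List α, w.length = l ∧ w <:+ S ∧ w <:+ T }

/-- `Lfun T₁ T₂ i s h` : the smallest `j` with `slcs (T₁[1..i]) (T₂[1..j]) h = s`,
or `⊤` if no such `j` exists. -/
noncomputable def Lfun {α : Type*} (T₁ T₂ : List α) (i s h : ℕ) : ℕ∞ :=
  sInf { j : ℕ∞ | ∃ jn : ℕ, j = (jn : ℕ∞) ∧ slcs (T₁.take i) (T₂.take jn) h = s }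

/-! Let `ℓ = min (lcsuf S T) s` and let `w` be the common suffix of `S` and `T` of length `ℓ`;
since `u` is a common suffix, `|u| ≤ ℓ`. Cut the first `h - 1` segments down to their first
`s - ℓ` symbols. In `S = x ++ u ++ r` (with `us` embedded into `x`) the cut segments embed into a
prefix of `x` that leaves at least `|us.flatten| - (s - ℓ) = ℓ - |u|` symbols of `x` unused, so
they end before the suffix `w` of `S` starts; the same holds in `T`. -/

namespace Embeds

variable {α : Type*}

theorem flatten_length_le : ∀ {vs : List (List α)} {X : List α},
    Embeds vs X → vs.flatten.length ≤ X.length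
  | [], _, _ => by simp
  | _ :: _, _, ⟨_, _, rfl, h⟩ => by
    have := flatten_length_le h
    simp only [flatten_cons, length_append]
    omega

theorem append_right : ∀ {vs : List (List α)} {X : List α}, Embeds vs X → ∀ Y, Embeds vs (X ++ Y)
  | [], _, _, _ => trivial
  | _ :: _, _, ⟨p, T', rfl, h⟩, Y => ⟨p, T' ++ Y, by simp, h.append_right Y⟩

theorem append_singleton_iff {vs : List (List α)} {w S : List α} :
    Embeds (vs ++ [w]) S ↔ ∃ x r, S = x ++ w ++ r ∧ Embeds vs x := by
  induction vs generalizing S with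
  | nil => simp [Embeds]
  | cons v vs ih =>
    simp only [cons_append, Embeds, ih]
    constructor
    · rintro ⟨p, T', rfl, x, r, rfl, hx⟩
      exact ⟨p ++ v ++ x, r, by simp, p, x, rfl, hx⟩
    · rintro ⟨x, r, rfl, p, T', rfl, hT'⟩
      exact ⟨p, T' ++ w ++ r, by simp, T', r, rfl, hT'⟩

end Embeds

def takeSegments {α : Type*} : List (List α) → ℕ → List (List α)
  | [], _ => []
  | v :: vs, k => v.take k :: takeSegments vs (k - v.length)

section takeSegments

variable {α : Type*}

@[simp]
theorem length_takeSegments : ∀ (vs : List (List α)) (k : ℕ),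
    (takeSegments vs k).length = vs.length
  | [], _ => rfl
  | _ :: vs, _ => congrArg (· + 1) (length_takeSegments vs _)

@[simp]
theorem flatten_takeSegments : ∀ (vs : List (List α)) (k : ℕ),
    (takeSegments vs k).flatten = vs.flatten.take k
  | [], _ => by simp [takeSegments]
  | v :: vs, k => by simp [takeSegments, flatten_takeSegments vs, take_append]

theorem embeds_takeSegments_zero : ∀ (vs : List (List α)) (X : List α),
    Embeds (takeSegments vs 0) X
  | [], _ => trivial
  | _ :: vs, X => ⟨[], X, by simp, by simpa using embeds_takeSegments_zero vs X⟩

theorem Embeds.exists_takeSegments_append {vs : List (List α)} {X : List α}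
    (h : Embeds vs X) (k : ℕ) :
    ∃ Y Z, X = Y ++ Z ∧ vs.flatten.length - k ≤ Z.length ∧ Embeds (takeSegments vs k) Y := by
  induction vs generalizing X k with
  | nil => exact ⟨X, [], by simp, by simp, trivial⟩
  | cons v vs ih =>
    obtain ⟨p, T', rfl, hT'⟩ := h
    have hT'len := hT'.flatten_length_le
    rcases le_or_gt k v.length with hk | hk
    · refine ⟨p ++ v.take k, v.drop k ++ T', ?_, ?_, ?_⟩
      · rw [append_assoc p (v.take k), ← append_assoc (v.take k), take_append_drop, append_assoc]
      · simp only [flatten_cons, length_append, length_drop]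
        omega
      · refine ⟨p, [], by simp, ?_⟩
        rw [Nat.sub_eq_zero_of_le hk]
        exact embeds_takeSegments_zero vs []
    · obtain ⟨Y, Z, rfl, hZ, hY⟩ := ih hT' (k - v.length)
      refine ⟨p ++ v ++ Y, Z, by simp, ?_, ?_⟩
      · simp only [flatten_cons, length_append]
        omega
      · exact ⟨p, Y, by rw [take_of_length_le hk.le], hY⟩

theorem Embeds.takeSegments_append_suffix {vs : List (List α)} {u w S : List α}
    (h : Embeds (vs ++ [u]) S) (k : ℕ) (hw : w <:+ S)
    (hlen : w.length ≤ vs.flatten.length - k + u.length) :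
    Embeds (takeSegments vs k ++ [w]) S := by
  obtain ⟨x, r, rfl, hx⟩ := Embeds.append_singleton_iff.1 h
  obtain ⟨Y, Z, rfl, hZ, hY⟩ := hx.exists_takeSegments_append k
  obtain ⟨g, hg⟩ : w <:+ Z ++ u ++ r :=
    suffix_of_suffix_length_le (by simpa using hw) (suffix_append Y _)
      (by simp only [length_append]; omega)
  exact Embeds.append_singleton_iff.2 ⟨Y ++ g, [], by simp [← hg], hY.append_right g⟩

end takeSegments

section lcsuf

variable {α : Type*}

theorem le_lcsuf {S T w : List α} (hS : w <:+ S) (hT : w <:+ T) : w.length ≤ lcsuf S T :=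
  le_csSup ⟨S.length, fun _ ⟨_, hl, hwS, _⟩ => hl ▸ hwS.length_le⟩ ⟨w, rfl, hS, hT⟩

theorem exists_common_suffix_of_le_lcsuf (S T : List α) {n : ℕ} (hn : n ≤ lcsuf S T) :
    ∃ w : List α, w.length = n ∧ w <:+ S ∧ w <:+ T := by
  obtain ⟨w, hw, hwS, hwT⟩ : lcsuf S T ∈ { l | ∃ w : List α, w.length = l ∧ w <:+ S ∧ w <:+ T } :=
    Nat.sSup_mem ⟨0, [], rfl, nil_suffix, nil_suffix⟩
      ⟨S.length, fun _ ⟨_, hl, hwS, _⟩ => hl ▸ hwS.length_le⟩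
  exact ⟨w.drop (w.length - n), by simp; omega, (drop_suffix _ w).trans hwS,
    (drop_suffix _ w).trans hwT⟩

end lcsuf

theorem exists_segmentation_with_long_last_segment {α : Type*} (S T : List α)
    (us : List (List α)) (u : List α)
    (hS : Embeds (us ++ [u]) S) (hT : Embeds (us ++ [u]) T)
    (huS : u <:+ S) (huT : u <:+ T) :
    ∃ (us' : List (List α)) (u' : List α),
      (us' ++ [u']).length = (us ++ [u]).length ∧
      (us' ++ [u']).flatten.length = (us ++ [u]).flatten.length ∧
      Embeds (us' ++ [u']) S ∧ Embeds (us' ++ [u']) T ∧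
      u'.length = min (lcsuf S T) ((us ++ [u]).flatten.length) := by
  have hs : (us ++ [u]).flatten.length = us.flatten.length + u.length := by simp
  have hu := le_lcsuf huS huT
  obtain ⟨w, hw, hwS, hwT⟩ :=
    exists_common_suffix_of_le_lcsuf S T (min_le_left _ (us ++ [u]).flatten.length)
  have hlen :
      w.length ≤ us.flatten.length - ((us ++ [u]).flatten.length - w.length) + u.length := by
    omega
  refine ⟨takeSegments us ((us ++ [u]).flatten.length - w.length), w, by simp, ?_,
    hS.takeSegments_append_suffix _ hwS hlen, hT.takeSegments_append_suffix _ hwT hlen, hw⟩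
  simp only [flatten_append, flatten_takeSegments, flatten_cons, flatten_nil, append_nil,
    length_append, length_take]
  omega
end

section
/- For strings T, P and positive integer f, P ∈ SegSub^f(T) if and only if f ≥ d + 1, where d is the minimum number of cost-1 operations needed to transform T into P using: (i) deleting a nonempty prefix with cost 0, (ii) deleting a nonempty suffix with cost 0, and (iii) deleting a nonempty internal factor (neither prefix nor suffix of the current string) with cost 1; here d = ∞ (and no f works) if P is not a subsequence of T. -/
open List

/-- Interleave segments `us` with gaps `gs` : `u₁ ++ g₁ ++ u₂ ++ g₂ ++ ⋯`. -/
def weave {α : Type*} : List (List α) → List (List α) → List α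
  | [], _ => []
  | u :: us, [] => u ++ weave us []
  | u :: us, g :: gs => u ++ g ++ weave us gs

/-- Minimum number of nonempty internal factors that must be deleted from `T`
(together with a possibly empty prefix and suffix) to obtain `P`; `⊤` if impossible. -/
noncomputable def minDel {α : Type*} (T P : List α) : ℕ∞ :=
  sInf ((↑) '' { k : ℕ | ∃ (p s : List α) (us gs : List (List α)),
    us.length = k + 1 ∧ gs.length = k ∧ (∀ g ∈ gs, g ≠ []) ∧
    us.flatten = P ∧ T = p ++ weave us gs ++ s })

/-!
Deleting a prefix, a suffix and `k` nonempty internal factors of `T` leaves `k + 1` segments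
embedded in `T`; padding with empty segments gives `f` of them for any `f ≥ k + 1`.
Conversely, merging the neighbouring segments of an embedding of `f` segments wherever the
gap between them is empty leaves at most `f` segments separated by nonempty gaps, i.e. at
most `f - 1` internal deletions.
-/

section

variable {α : Type*}

def deletionCounts (T P : List α) : Set ℕ :=
  { k : ℕ | ∃ (p s : List α) (us gs : List (List α)),
    us.length = k + 1 ∧ gs.length = k ∧ (∀ g ∈ gs, g ≠ []) ∧
    us.flatten = P ∧ T = p ++ weave us gs ++ s }

theorem minDel_eq_sInf_deletionCounts (T P : List α) :
    minDel T P = sInf ((↑) '' deletionCounts T P) := rfl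

theorem ENat.sInf_image_natCast_add_one_le_iff {S : Set ℕ} {n : ℕ} :
    sInf ((↑) '' S : Set ℕ∞) + 1 ≤ n ↔ ∃ k ∈ S, k + 1 ≤ n := by
  simp only [ENat.add_one_le_natCast_iff, sInf_lt_iff, Set.exists_mem_image, Nat.cast_lt,
    Nat.lt_iff_add_one_le]

theorem weave_cons_append (a b : List α) (us gs : List (List α)) :
    weave ((a ++ b) :: us) gs = a ++ weave (b :: us) gs := by
  cases gs <;> simp [weave]

theorem Embeds.append_left {us : List (List α)} {T : List α} (h : Embeds us T) (p : List α) :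
    Embeds us (p ++ T) := by
  cases us with
  | nil => trivial
  | cons u us =>
    obtain ⟨q, T', rfl, h'⟩ := h
    exact ⟨p ++ q, T', by simp, h'⟩

theorem embeds_weave_append (us gs : List (List α)) (s : List α) :
    Embeds us (weave us gs ++ s) := by
  induction us generalizing gs with
  | nil => trivial
  | cons u us ih =>
    cases gs with
    | nil => exact ⟨[], weave us [] ++ s, by simp [weave], ih []⟩
    | cons g gs => exact ⟨[], g ++ (weave us gs ++ s), by simp [weave], (ih gs).append_left g⟩

theorem embeds_replicate_nil (n : ℕ) (T : List α) : Embeds (replicate n []) T := by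
  induction n with
  | zero => trivial
  | succ n ih => exact ⟨[], T, by simp, ih⟩

theorem Embeds.append_replicate_nil {us : List (List α)} {T : List α} (h : Embeds us T)
    (n : ℕ) : Embeds (us ++ replicate n []) T := by
  induction us generalizing T with
  | nil => exact embeds_replicate_nil n T
  | cons u us ih =>
    obtain ⟨p, T', rfl, h'⟩ := h
    exact ⟨p, T', rfl, ih h'⟩

theorem Embeds.exists_weave {us : List (List α)} {T : List α} (hus : us ≠ [])
    (h : Embeds us T) : ∃ (p s : List α) (vs hs : List (List α)),
      vs.length ≤ us.length ∧ vs.length = hs.length + 1 ∧ (∀ g ∈ hs, g ≠ []) ∧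
      vs.flatten = us.flatten ∧ T = p ++ weave vs hs ++ s := by
  induction us generalizing T with
  | nil => exact absurd rfl hus
  | cons u us ih =>
    obtain ⟨p, T', rfl, h'⟩ := h
    rcases eq_or_ne us [] with rfl | hne
    · exact ⟨p, T', [u], [], by simp, by simp, by simp, rfl, by simp [weave]⟩
    obtain ⟨q, s, vs, hs, hle, hlen, hgaps, hflat, rfl⟩ := ih hne h'
    obtain ⟨w, ws, rfl⟩ := exists_cons_of_length_eq_add_one hlen
    rcases eq_or_ne q [] with rfl | hq
    · refine ⟨p, s, (u ++ w) :: ws, hs, by simpa using hle.trans (Nat.le_succ _), hlen,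
        hgaps, by simp_all, ?_⟩
      simp [weave_cons_append]
    · refine ⟨p, s, u :: w :: ws, q :: hs, by simpa using hle, by simpa using hlen, ?_,
        by simp_all, by simp [weave]⟩
      rintro g (_ | ⟨_, hg⟩)
      exacts [hq, hgaps g hg]

theorem mem_segSub_iff_exists_mem_deletionCounts {T P : List α} {f : ℕ} (hf : 1 ≤ f) :
    P ∈ SegSub f T ↔ ∃ k ∈ deletionCounts T P, k + 1 ≤ f := by
  constructor
  · rintro ⟨us, rfl, rfl, hemb⟩
    obtain ⟨p, s, vs, hs, hle, hlen, hgaps, hflat, hT⟩ :=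
      hemb.exists_weave (ne_nil_of_length_pos hf)
    exact ⟨hs.length, ⟨p, s, vs, hs, hlen, rfl, hgaps, hflat, hT⟩, hlen ▸ hle⟩
  · rintro ⟨k, ⟨p, s, us, gs, hus, -, -, rfl, rfl⟩, hk⟩
    have hemb : Embeds us (p ++ weave us gs ++ s) := by
      rw [append_assoc]
      exact (embeds_weave_append us gs s).append_left p
    refine ⟨us ++ replicate (f - (k + 1)) [], ?_, by simp, hemb.append_replicate_nil _⟩
    simp only [length_append, length_replicate, hus]
    omega

end

theorem segSub_iff_minDel {α : Type*} (T P : List α) (f : ℕ) (hf : 1 ≤ f) :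
    P ∈ SegSub f T ↔ (f : ℕ∞) ≥ minDel T P + 1 := by
  rw [ge_iff_le, minDel_eq_sInf_deletionCounts, ENat.sInf_image_natCast_add_one_le_iff,
    mem_segSub_iff_exists_mem_deletionCounts hf]
end
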